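/- In the separating instance with m = 2^k instantiations (k ≥ 2, all attributes binary) and one bidder per instantiation — where bidder ω values only instantiation ω, at m/2 if ω is the all-zeros or the all-ones instantiation and at 1 otherwise — every attribute hiding scheme O achieves revenue ∑_{b ∈ O} 2(members b) + ∑_{ω ∉ ⋃_{b ∈ O} members b} 2({ω}) ≤ m/2, and the scheme {⊤} consisting of the single bundle hiding all attributes achieves revenue exactly m/2. (Combined with the fact that arbitrary clustering achieves m − 1 on this instance, the ratio of the optimal clustering revenue to the optimal attribute hiding revenue is (2m − 2)/m, which approaches 2 for large m.) -/
import Mathlib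


/-- The instantiation space: `k` binary attributes. -/
abbrev Om (k : ℕ) := Fin k → Fin 2

/-- A natural bundle over `k` binary attributes: each attribute either takes a specific
value (`some a`) or is hidden (`none`). -/
abbrev Bund (k : ℕ) := Fin k → Option (Fin 2)

/-- The set of instantiations belonging to a natural bundle. -/
def members {k : ℕ} (b : Bund k) : Finset (Om k) :=
  Finset.univ.filter fun ω => ∀ i, b i = none ∨ b i = some (ω i)

/-- An attribute hiding scheme: a finite set of natural bundles with pairwise disjoint
member sets. -/
def IsScheme {k : ℕ} (O : Finset (Bund k)) : Prop :=
  ∀ b ∈ O, ∀ b' ∈ O, b ≠ b' → Disjoint (members b) (members b')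

/-- Bidder `ω`'s valuation of instantiation `ω`: `m / 2 = 2 ^ k / 2` if `ω` is the
all-zeros or the all-ones instantiation and `1` otherwise. -/
noncomputable def val (k : ℕ) (ω : Om k) : ℝ :=
  if ω = (fun _ => 0) ∨ ω = (fun _ => 1) then (2 ^ k : ℝ) / 2 else 1

/-- There is one bidder per instantiation: bidder `ω` values only instantiation `ω`. -/
noncomputable def v (k : ℕ) (ω ω' : Om k) : ℝ := if ω' = ω then val k ω else 0

/-- Bidder `ω`'s (additive) value for a set of instantiations. -/
noncomputable def Vv (k : ℕ) (ω : Om k) (B : Finset (Om k)) : ℝ := ∑ x ∈ B, v k ω x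

/-- The pairs of distinct bidders. -/
def pairsO (k : ℕ) : Finset (Om k × Om k) := Finset.univ.filter fun p => p.1 ≠ p.2

theorem pairsO_nonempty {k : ℕ} (hk : 1 ≤ k) : (pairsO k).Nonempty := by
  refine ⟨((fun _ => 0), (fun _ => 1)), ?_⟩
  simp only [pairsO, Finset.mem_filter, Finset.mem_univ, true_and]
  intro h
  simpa using congrFun h ⟨0, by omega⟩

/-- The second price of a set of instantiations: the max over pairs of distinct bidders
of the min of the two bidders' values for the set. -/
noncomputable def sp {k : ℕ} (hk : 2 ≤ k) (B : Finset (Om k)) : ℝ :=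
  (pairsO k).sup' (pairsO_nonempty (by omega))
    fun p => min (Vv k p.1 B) (Vv k p.2 B)

lemma Vv_eq (k : ℕ) (ω : Om k) (B : Finset (Om k)) :
    Vv k ω B = if ω ∈ B then val k ω else 0 := by
  simp [Vv, v, Finset.sum_ite_eq']

lemma two_le_half (k : ℕ) (hk : 2 ≤ k) : (2 : ℝ) ≤ (2 ^ k : ℝ) / 2 := by
  have h : (2 : ℝ) ^ 2 ≤ 2 ^ k := by
    apply pow_le_pow_right₀ (by norm_num) hk
  norm_num at h ⊢
  linarith

lemma val_le (k : ℕ) (hk : 2 ≤ k) (ω : Om k) : val k ω ≤ (2 ^ k : ℝ) / 2 := by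
  have := two_le_half k hk
  unfold val; split <;> linarith

lemma Vv_le (k : ℕ) (hk : 2 ≤ k) (ω : Om k) (B : Finset (Om k)) :
    Vv k ω B ≤ (2 ^ k : ℝ) / 2 := by
  rw [Vv_eq]
  have := two_le_half k hk
  have := val_le k hk ω
  split <;> linarith

lemma sp_le_zero {k : ℕ} (hk : 2 ≤ k) {B : Finset (Om k)} (hB : B.card ≤ 1) :
    sp hk B ≤ 0 := by
  apply Finset.sup'_le
  rintro ⟨ω, ω'⟩ hp
  simp only [pairsO, Finset.mem_filter, Finset.mem_univ, true_and] at hp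
  by_cases hω : ω ∈ B
  · have hω' : ω' ∉ B := by
      intro h
      exact absurd (Finset.one_lt_card.mpr ⟨ω, hω, ω', h, hp⟩) (by omega)
    have : Vv k ω' B = 0 := by rw [Vv_eq, if_neg hω']
    calc min (Vv k ω B) (Vv k ω' B) ≤ Vv k ω' B := min_le_right _ _
      _ = 0 := this
  · have : Vv k ω B = 0 := by rw [Vv_eq, if_neg hω]
    calc min (Vv k ω B) (Vv k ω' B) ≤ Vv k ω B := min_le_left _ _
      _ = 0 := this

lemma sp_members_le {k : ℕ} (hk : 2 ≤ k) {b : Bund k}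
    (hb : b ≠ fun _ => none) :
    sp hk (members b) ≤ ((members b).card : ℝ) / 2 := by
  rcases le_or_gt (members b).card 1 with h | h
  · exact le_trans (sp_le_zero hk h) (by positivity)
  · have h1 : sp hk (members b) ≤ 1 := by
      apply Finset.sup'_le
      rintro ⟨ω, ω'⟩ hp
      simp only [pairsO, Finset.mem_filter, Finset.mem_univ, true_and] at hp
      by_cases hω : ω ∈ members b
      · by_cases hω' : ω' ∈ members b
        · -- both in members b; not both special
          obtain ⟨i, hi⟩ : ∃ i, b i ≠ none := by
            by_contra hcon
            push_neg at hcon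
            exact hb (funext hcon)
          obtain ⟨a, ha⟩ := Option.ne_none_iff_exists'.mp hi
          have hmem : ∀ {x : Om k}, x ∈ members b → a = x i := by
            intro x hx
            simp only [members, Finset.mem_filter, Finset.mem_univ, true_and] at hx
            rcases hx i with h' | h'
            · exact absurd h' hi
            · rw [ha] at h'; exact Option.some_injective _ h'
          have hnotboth : ¬ ((ω = (fun _ => 0) ∨ ω = fun _ => 1) ∧
              (ω' = (fun _ => 0) ∨ ω' = fun _ => 1)) := by
            rintro ⟨h1' | h1', h2' | h2'⟩
            · exact hp (h1'.trans h2'.symm)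
            · have e1 := hmem hω; have e2 := hmem hω'
              rw [h1'] at e1; rw [h2'] at e2
              simp at e1 e2; rw [e1] at e2; exact absurd e2 (by decide)
            · have e1 := hmem hω; have e2 := hmem hω'
              rw [h1'] at e1; rw [h2'] at e2
              simp at e1 e2; rw [e1] at e2; exact absurd e2 (by decide)
            · exact hp (h1'.trans h2'.symm)
          rcases not_and_or.mp hnotboth with hs | hs
          · have : Vv k ω (members b) = 1 := by
              rw [Vv_eq, if_pos hω, val, if_neg hs]
            calc min (Vv k ω (members b)) (Vv k ω' (members b))
                ≤ Vv k ω (members b) := min_le_left _ _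
              _ = 1 := this
          · have : Vv k ω' (members b) = 1 := by
              rw [Vv_eq, if_pos hω', val, if_neg hs]
            calc min (Vv k ω (members b)) (Vv k ω' (members b))
                ≤ Vv k ω' (members b) := min_le_right _ _
              _ = 1 := this
        · have : Vv k ω' (members b) = 0 := by rw [Vv_eq, if_neg hω']
          calc min (Vv k ω (members b)) (Vv k ω' (members b))
              ≤ Vv k ω' (members b) := min_le_right _ _
            _ ≤ 1 := by rw [this]; norm_num
      · have : Vv k ω (members b) = 0 := by rw [Vv_eq, if_neg hω]
        calc min (Vv k ω (members b)) (Vv k ω' (members b))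
            ≤ Vv k ω (members b) := min_le_left _ _
          _ ≤ 1 := by rw [this]; norm_num
    have h2 : (2 : ℝ) ≤ ((members b).card : ℝ) := by exact_mod_cast h
    linarith

lemma members_top {k : ℕ} : members (fun _ => none : Bund k) = Finset.univ := by
  simp [members]

lemma sp_univ {k : ℕ} (hk : 2 ≤ k) :
    sp hk (Finset.univ : Finset (Om k)) = (2 ^ k : ℝ) / 2 := by
  apply le_antisymm
  · apply Finset.sup'_le
    rintro ⟨ω, ω'⟩ _
    calc min (Vv k ω Finset.univ) (Vv k ω' Finset.univ)
        ≤ Vv k ω Finset.univ := min_le_left _ _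
      _ ≤ (2 ^ k : ℝ) / 2 := Vv_le k hk ω _
  · have hmem : (((fun _ => 0 : Om k), (fun _ => 1 : Om k))) ∈ pairsO k := by
      simp only [pairsO, Finset.mem_filter, Finset.mem_univ, true_and]
      intro h
      simpa using congrFun h ⟨0, by omega⟩
    have := Finset.le_sup' (f := fun p : Om k × Om k =>
      min (Vv k p.1 Finset.univ) (Vv k p.2 Finset.univ)) hmem
    refine le_trans ?_ this
    rw [Vv_eq, Vv_eq, if_pos (Finset.mem_univ _), if_pos (Finset.mem_univ _),
      val, val, if_pos (Or.inl rfl), if_pos (Or.inr rfl), min_self]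

lemma card_Om (k : ℕ) : Fintype.card (Om k) = 2 ^ k := by
  simp [Om]

/-- In the separating instance, every attribute hiding scheme achieves revenue at most
`m / 2 = 2 ^ k / 2`, and the scheme `{⊤}` hiding all attributes achieves exactly
`m / 2`. -/
theorem stmt16 (k : ℕ) (hk : 2 ≤ k) :
    (∀ O : Finset (Bund k), IsScheme O →
      ∑ b ∈ O, sp hk (members b)
          + ∑ ω ∈ Finset.univ \ O.biUnion members, sp hk {ω}
        ≤ (2 ^ k : ℝ) / 2) ∧
    (∑ b ∈ ({fun _ => none} : Finset (Bund k)), sp hk (members b)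
        + ∑ ω ∈ Finset.univ \ ({fun _ => none} : Finset (Bund k)).biUnion members,
            sp hk {ω}
      = (2 ^ k : ℝ) / 2) := by
  constructor
  · intro O hO
    have hsingle : ∀ ω : Om k, sp hk ({ω} : Finset (Om k)) ≤ 0 := fun ω =>
      sp_le_zero hk (by simp)
    have hrest : ∑ ω ∈ Finset.univ \ O.biUnion members, sp hk {ω} ≤ 0 :=
      Finset.sum_nonpos fun ω _ => hsingle ω
    have hmain : ∑ b ∈ O, sp hk (members b) ≤ (2 ^ k : ℝ) / 2 := by
      by_cases htop : (fun _ => none : Bund k) ∈ O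
      · rw [← Finset.sum_erase_add O _ htop, members_top, sp_univ hk]
        have : ∑ b ∈ O.erase (fun _ => none), sp hk (members b) ≤ 0 := by
          apply Finset.sum_nonpos
          intro b hb
          have hne : b ≠ fun _ => none := Finset.ne_of_mem_erase hb
          have hdisj := hO b (Finset.mem_of_mem_erase hb) _ htop hne
          rw [members_top] at hdisj
          have : members b = ∅ :=
            Finset.eq_empty_of_forall_notMem fun x hx =>
              Finset.disjoint_left.mp hdisj hx (Finset.mem_univ x)
          apply sp_le_zero hk
          rw [this]; simp
        linarith
      · have h1 : ∑ b ∈ O, sp hk (members b)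
            ≤ ∑ b ∈ O, ((members b).card : ℝ) / 2 := by
          apply Finset.sum_le_sum
          intro b hb
          exact sp_members_le hk (fun h => htop (h ▸ hb))
        have h2 : ∑ b ∈ O, ((members b).card : ℝ)
            = ((O.biUnion members).card : ℝ) := by
          rw [Finset.card_biUnion hO]; push_cast; ring
        have h3 : (O.biUnion members).card ≤ 2 ^ k := by
          rw [← card_Om k]
          exact Finset.card_le_univ _
        have h3' : ((O.biUnion members).card : ℝ) ≤ (2 ^ k : ℝ) := by
          exact_mod_cast h3
        calc ∑ b ∈ O, sp hk (members b)
            ≤ ∑ b ∈ O, ((members b).card : ℝ) / 2 := h1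
          _ = (∑ b ∈ O, ((members b).card : ℝ)) / 2 := by
              rw [Finset.sum_div]
          _ ≤ (2 ^ k : ℝ) / 2 := by rw [h2]; linarith
    linarith
  · have hb : (({fun _ => none} : Finset (Bund k)).biUnion members)
        = Finset.univ := by
      simp [members_top]
    rw [hb]
    simp [members_top, sp_univ hk]
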